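/- Two LPMLN programs are q-strongly equivalent if and only if they are p-strongly equivalent. -/

import Mathlib

open scoped Classical

noncomputable section

namespace LPMLN

/-- A ground literal: an atom (numbered by `ℕ`) or its classical negation. -/
inductive Lit where
  | pos : ℕ → Lit
  | neg : ℕ → Lit
deriving DecidableEq

/-- The complementary literal. -/
def Lit.compl : Lit → Lit
  | .pos a => .neg a
  | .neg a => .pos a

/-- A finite set of literals is consistent if it contains no complementary pair. -/
def Consistent (I : Finset Lit) : Prop := ∀ l ∈ I, l.compl ∉ I

/-- An ASP rule, given by its head, positive body and negative body. -/
structure Rule where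
  head : Finset Lit
  pos : Finset Lit
  neg : Finset Lit
deriving DecidableEq

/-- The literals occurring in a rule. -/
def Rule.lits (r : Rule) : Finset Lit := r.head ∪ r.pos ∪ r.neg

/-- Satisfaction of a rule by a set of literals. -/
def Sat (I : Finset Lit) (r : Rule) : Prop :=
  r.pos ⊆ I → r.neg ∩ I = ∅ → (r.head ∩ I).Nonempty

/-- Satisfaction of an ASP program. -/
def SatProg (I : Finset Lit) (prog : Finset Rule) : Prop := ∀ r ∈ prog, Sat I r

/-- The GL-reduct of an ASP program w.r.t. an interpretation. -/
def glReduct (prog : Finset Rule) (I : Finset Lit) : Finset Rule :=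
  (prog.filter fun r => r.neg ∩ I = ∅).image fun r => ⟨r.head, r.pos, ∅⟩

/-- `I` is a stable model of the ASP program `prog`: `I` is a consistent set of
literals satisfying the GL-reduct, no proper subset of which satisfies the GL-reduct. -/
def AspStable (prog : Finset Rule) (I : Finset Lit) : Prop :=
  Consistent I ∧ SatProg I (glReduct prog I) ∧ ∀ J ⊂ I, ¬ SatProg J (glReduct prog I)

/-- A weight: a real number (soft rule) or the symbol `α` (hard rule). -/
inductive Weight where
  | soft : ℝ → Weight
  | hard : Weight

/-- The real value of a soft weight (hard weights get the dummy value 0). -/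
def Weight.val : Weight → ℝ
  | .soft w => w
  | .hard => 0

/-- A weighted rule `w : r`. -/
structure WRule where
  w : Weight
  r : Rule

/-- An LPMLN program: a finite set of weighted rules. -/
abbrev Program := Finset WRule

/-- The LPMLN reduct `P_I`: the rules of `P` satisfied by `I`. -/
def reduct (P : Program) (I : Finset Lit) : Program := P.filter fun wr => Sat I wr.r

/-- The unweighted ASP counterpart of an LPMLN program. -/
def unweighted (P : Program) : Finset Rule := P.image fun wr => wr.r

/-- `I` is a stable model of the LPMLN program `P`: `I` is a stable model of the
unweighted ASP counterpart of the LPMLN reduct `P_I`. -/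
def Stable (P : Program) (I : Finset Lit) : Prop :=
  AspStable (unweighted (reduct P I)) I

/-- The literals occurring in an LPMLN program. -/
def litset (P : Program) : Finset Lit := P.biUnion fun wr => wr.r.lits

/-- `(X, Y)` is an SE-interpretation: a pair of interpretations with `X ⊆ Y`. -/
def SEInterp (X Y : Finset Lit) : Prop := Consistent X ∧ Consistent Y ∧ X ⊆ Y

/-- `(X, Y)` is an SE-model of the LPMLN program `P`: an SE-interpretation such that
`X` satisfies the GL-reduct (w.r.t. `Y`) of the unweighted version of `P_Y`. -/
def SEModel (P : Program) (X Y : Finset Lit) : Prop :=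
  SEInterp X Y ∧ SatProg X (glReduct (unweighted (reduct P Y)) Y)

/-- The number of hard rules of `P` satisfied by `I`. -/
def hardCount (P : Program) (I : Finset Lit) : ℕ :=
  ((reduct P I).filter fun wr => wr.w = Weight.hard).card

/-- The sum of the weights of the soft rules of `P` satisfied by `I`. -/
def softWeight (P : Program) (I : Finset Lit) : ℝ :=
  ∑ wr ∈ ((reduct P I).filter fun wr => wr.w ≠ Weight.hard), wr.w.val

/-- The weight degree `W(P, I) = exp(Σ_{w:r ∈ P_I} w)`, viewed as the real-valued
function `A ↦ exp(c' + k'·A)` of the value `A` given to the symbol `α`, where `k'` is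
the number of hard rules of `P` satisfied by `I` and `c'` the sum of the weights of the
soft rules of `P` satisfied by `I`. -/
def wdeg (P : Program) (I : Finset Lit) (A : ℝ) : ℝ :=
  Real.exp (softWeight P I + A * hardCount P I)

/-- The (finite) set of stable models of `P` (every stable model of `P` is a subset of
`litset P`). -/
def SMset (P : Program) : Finset (Finset Lit) :=
  (litset P).powerset.filter fun I => Stable P I

/-- The probability degree `Pr(P, I)`: the limit, as `α → ∞`, of
`W(P, I) / Σ_{I' ∈ SM(P)} W(P, I')` if `I` is a stable model of `P`, and `0` otherwise. -/
def PrDeg (P : Program) (I : Finset Lit) : ℝ :=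
  if Stable P I then
    Filter.limUnder Filter.atTop fun A => wdeg P I A / ∑ I' ∈ SMset P, wdeg P I' A
  else 0

/-- `I` is a probabilistic stable model of `P`: a stable model of `P` satisfying the
maximum number of hard rules of `P` (equivalently, with nonzero probability degree). -/
def PStable (P : Program) (I : Finset Lit) : Prop :=
  Stable P I ∧ ∀ J, Stable P J → hardCount P J ≤ hardCount P I

/-- Semi-strong equivalence: the extensions by any LPMLN program have the same
stable models. -/
def SemiStrongEq (P Q : Program) : Prop :=
  ∀ R : Program, ∀ I, Stable (P ∪ R) I ↔ Stable (Q ∪ R) I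

/-- p-ordinary equivalence: same stable models and same probability degrees. -/
def POrdEq (P Q : Program) : Prop :=
  (∀ I, Stable P I ↔ Stable Q I) ∧ ∀ I, Stable P I → PrDeg P I = PrDeg Q I

/-- p-strong equivalence: p-ordinary equivalence under every extension. -/
def PStrongEq (P Q : Program) : Prop := ∀ R : Program, POrdEq (P ∪ R) (Q ∪ R)

/-- Comparison of the symbolic weight degrees of two interpretations w.r.t. `P`:
`exp(c + k·α) ≤ exp(c' + k'·α)` iff `k < k'`, or `k = k'` and `c ≤ c'`. -/
def WLe (P : Program) (I J : Finset Lit) : Prop :=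
  hardCount P I < hardCount P J ∨
    (hardCount P I = hardCount P J ∧ softWeight P I ≤ softWeight P J)

/-- q-strong equivalence: same stable models under every extension, with
order-preserving weight degrees. -/
def QStrongEq (P Q : Program) : Prop :=
  ∀ R : Program,
    (∀ I, Stable (P ∪ R) I ↔ Stable (Q ∪ R) I) ∧
    ∀ X Y, Stable (P ∪ R) X → Stable (P ∪ R) Y → (WLe (P ∪ R) X Y ↔ WLe (Q ∪ R) X Y)

/-- A soft stable model of `P`: a stable model of `P` satisfying all hard rules of `P`. -/
def SoftStable (P : Program) (I : Finset Lit) : Prop :=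
  Stable P I ∧ ∀ wr ∈ P, wr.w = Weight.hard → Sat I wr.r

/-- A soft SE-model of `P`: an SE-model `(X, Y)` of `P` such that `Y` satisfies all
hard rules of `P`. -/
def SoftSEModel (P : Program) (X Y : Finset Lit) : Prop :=
  SEModel P X Y ∧ ∀ wr ∈ P, wr.w = Weight.hard → Sat Y wr.r

/-- The (finite) set of soft stable models of `P`. -/
def SSMset (P : Program) : Finset (Finset Lit) :=
  (litset P).powerset.filter fun I => SoftStable P I

/-- The probability degree under the soft stable model semantics:
`Pr_s(P, X) = W_s(P, X) / Σ_{X' ∈ SSM(P)} W_s(P, X')`, where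
`W_s(P, X) = exp(Σ_{w:r ∈ P^s, X ⊨ r} w)`. -/
def PrS (P : Program) (X : Finset Lit) : ℝ :=
  Real.exp (softWeight P X) / ∑ X' ∈ SSMset P, Real.exp (softWeight P X')

/-- sp-strong equivalence: p-strong equivalence under the soft stable model
semantics. -/
def SPStrongEq (P Q : Program) : Prop :=
  ∀ R : Program,
    (∀ I, SoftStable (P ∪ R) I ↔ SoftStable (Q ∪ R) I) ∧
    ∀ X, SoftStable (P ∪ R) X → PrS (P ∪ R) X = PrS (Q ∪ R) X

/-- `(X, Y)` is a UE-model of `P`: an SE-model with `X = Y`, or with `X ⊊ Y` such that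
no `X'` strictly between `X` and `Y` gives an SE-model `(X', Y)`. -/
def UEModel (P : Program) (X Y : Finset Lit) : Prop :=
  SEModel P X Y ∧
    (X = Y ∨ (X ⊂ Y ∧ ∀ X', X ⊂ X' → X' ⊂ Y → ¬ SEModel P X' Y))

/-- A program consisting of weighted facts only (rules with empty bodies). -/
def IsFactProg (R : Program) : Prop := ∀ wr ∈ R, wr.r.pos = ∅ ∧ wr.r.neg = ∅

/-- p-uniform equivalence: p-ordinary equivalence under every extension by a set of
weighted facts. -/
def PUniformEq (P Q : Program) : Prop :=
  ∀ R : Program, IsFactProg R → POrdEq (P ∪ R) (Q ∪ R)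

/-- The flattening rules `R(X, Y, a)`: the two hard rules
`α : ← X, not Y, a` and `α : a ← X, not Y`. -/
def flatten (X Y : Finset Lit) (a : ℕ) : Program :=
  {⟨Weight.hard, ⟨∅, X ∪ {Lit.pos a}, Y⟩⟩, ⟨Weight.hard, ⟨{Lit.pos a}, X, Y⟩⟩}

/-- The hard fact `α : l`. -/
def factOf (l : Lit) : WRule := ⟨Weight.hard, ⟨{l}, ∅, ∅⟩⟩

/-- The base flattening extension `E⁰(P, U) = P ∪ {α : a | a ∈ U}`. -/
def E0 (P : Program) (U : Finset Lit) : Program := P ∪ U.image factOf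

/-- `IsFlatExt P U k E` holds iff `E` is a flattening extension `E^k(P, U)`:
`E⁰(P, U) = P ∪ {α : a | a ∈ U}` and `E^{i+1}(P, U) = E^i(P, U) ∪ R(X ∩ U, U − X, c)`
where `X` is a probabilistic stable model of `E^i(P, U)` and `c` is a fresh atom. -/
inductive IsFlatExt (P : Program) (U : Finset Lit) : ℕ → Program → Prop
  | zero : IsFlatExt P U 0 (E0 P U)
  | succ {i : ℕ} {E : Program} {X : Finset Lit} {c : ℕ} :
      IsFlatExt P U i E → PStable E X →
      Lit.pos c ∉ litset E → Lit.neg c ∉ litset E →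
      IsFlatExt P U (i + 1) (E ∪ flatten (X ∩ U) (U \ X) c)

/-!
Both equivalences reduce to one invariant of `P ∪ R` versus `Q ∪ R` for every `R`
(`WeightEquiv`): the same stable models, the same preorder by the number of satisfied hard
rules, and the same soft-weight differences between models tied on hard rules. The invariant
gives the lexicographic comparison of weight degrees directly, and it gives equal probability
degrees because these are a softmax of soft weights over the models with the most hard rules,
which is invariant under a common shift.

Conversely, constraints with empty head never change stable models, so they can be added
freely. For q-strong equivalence, soft constraints `t : ← Y, not (X \ Y)` for cofinitely many
`t` reveal both the hard-rule comparison and the soft threshold between `X` and `Y`. For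
p-strong equivalence, many hard constraints against every other stable model leave `X` and
`Y` as the only contenders: their probabilities are positive exactly when they win on hard
rules, and their ratio is the exponential of their soft-weight difference.
-/

open Finset Filter Topology

lemma sat_constraint_iff {I pos neg : Finset Lit} :
    Sat I ⟨∅, pos, neg⟩ ↔ ¬(pos ⊆ I ∧ neg ∩ I = ∅) := by
  simp [Sat]

lemma reduct_union (S E : Program) (I : Finset Lit) :
    reduct (S ∪ E) I = reduct S I ∪ reduct E I :=
  filter_union _ _ _

lemma satProg_union {I : Finset Lit} {A B : Finset Rule} :
    SatProg I (A ∪ B) ↔ SatProg I A ∧ SatProg I B := by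
  simp only [SatProg, mem_union, or_imp, forall_and]

lemma glReduct_unweighted_reduct_union (S E : Program) (I : Finset Lit) :
    glReduct (unweighted (reduct (S ∪ E) I)) I =
      glReduct (unweighted (reduct S I)) I ∪ glReduct (unweighted (reduct E I)) I := by
  simp only [glReduct, unweighted, reduct_union, image_union, filter_union]

/-- A satisfied constraint has an unsatisfied positive body, so its GL-reduct holds in every
subset of the interpretation. -/
lemma satProg_glReduct_of_head_eq_empty {E : Program} (hE : ∀ wr ∈ E, wr.r.head = ∅)
    {I J : Finset Lit} (hJI : J ⊆ I) : SatProg J (glReduct (unweighted (reduct E I)) I) := by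
  simp only [SatProg, glReduct, unweighted, reduct, mem_image, mem_filter]
  rintro _ ⟨_, ⟨⟨wr, ⟨hwr, hsat⟩, rfl⟩, hneg⟩, rfl⟩ hpos -
  simpa [hE wr hwr] using hsat (hpos.trans hJI) hneg

lemma stable_union_of_head_eq_empty {S E : Program} (hE : ∀ wr ∈ E, wr.r.head = ∅)
    (I : Finset Lit) : Stable (S ∪ E) I ↔ Stable S I := by
  simp only [Stable, AspStable, glReduct_unweighted_reduct_union, satProg_union,
    satProg_glReduct_of_head_eq_empty hE subset_rfl, and_true]
  refine and_congr_right fun _ => and_congr_right fun _ => forall₂_congr fun J hJ => ?_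
  simp [satProg_glReduct_of_head_eq_empty hE hJ.subset]

lemma lits_subset_litset {S : Program} {wr : WRule} (h : wr ∈ S) : wr.r.lits ⊆ litset S :=
  subset_biUnion_of_mem (fun wr : WRule => wr.r.lits) h

lemma litset_mono {S T : Program} (h : S ⊆ T) : litset S ⊆ litset T :=
  biUnion_subset_biUnion_of_subset_left _ h

/-- Literals outside `litset S` never help to satisfy a head, so `I ∩ litset S` satisfies the
GL-reduct whenever `I` does; minimality then forces `I ⊆ litset S`. -/
lemma Stable.subset_litset {S : Program} {I : Finset Lit} (h : Stable S I) : I ⊆ litset S := by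
  obtain ⟨-, hsat, hmin⟩ := h
  by_contra hI
  refine hmin (I ∩ litset S)
    ⟨inter_subset_left, fun h' => hI fun x hx => (mem_inter.1 (h' hx)).2⟩ ?_
  intro g hg hpos _
  have hg' := hg
  simp only [glReduct, unweighted, reduct, mem_image, mem_filter] at hg'
  obtain ⟨_, ⟨⟨wr, ⟨hwr, -⟩, rfl⟩, -⟩, rfl⟩ := hg'
  obtain ⟨l, hl⟩ := hsat _ hg (hpos.trans inter_subset_left) (empty_inter I)
  have hl' := mem_inter.1 hl
  refine ⟨l, mem_inter.2 ⟨hl'.1, mem_inter.2 ⟨hl'.2, lits_subset_litset hwr ?_⟩⟩⟩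
  simp [Rule.lits, hl'.1]

lemma mem_SMset {S : Program} {I : Finset Lit} : I ∈ SMset S ↔ Stable S I := by
  simp only [SMset, mem_filter, mem_powerset]
  exact ⟨And.right, fun h => ⟨h.subset_litset, h⟩⟩

lemma SMset_eq_of_stable_iff {S T : Program} (h : ∀ I, Stable S I ↔ Stable T I) :
    SMset S = SMset T := by
  ext I
  rw [mem_SMset, mem_SMset, h]

lemma hardCount_union_of_disjoint {S E : Program} (h : Disjoint S E) (I : Finset Lit) :
    hardCount (S ∪ E) I = hardCount S I + hardCount E I := by
  rw [hardCount, reduct_union, filter_union, card_union_of_disjoint]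
  · rfl
  · exact h.mono ((filter_subset _ _).trans (filter_subset _ _))
      ((filter_subset _ _).trans (filter_subset _ _))

lemma softWeight_union_of_disjoint {S E : Program} (h : Disjoint S E) (I : Finset Lit) :
    softWeight (S ∪ E) I = softWeight S I + softWeight E I := by
  rw [softWeight, reduct_union, filter_union, sum_union]
  · rfl
  · exact h.mono ((filter_subset _ _).trans (filter_subset _ _))
      ((filter_subset _ _).trans (filter_subset _ _))

lemma hardCount_union_of_forall_soft {S E : Program} (hE : ∀ wr ∈ E, wr.w ≠ .hard)
    (I : Finset Lit) : hardCount (S ∪ E) I = hardCount S I := by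
  have hnone : (reduct E I).filter (fun wr => wr.w = .hard) = ∅ :=
    filter_eq_empty_iff.2 fun wr hwr => hE wr (filter_subset _ _ hwr)
  rw [hardCount, reduct_union, filter_union, hnone, union_empty]
  rfl

lemma softWeight_union_of_forall_hard {S E : Program} (hE : ∀ wr ∈ E, wr.w = .hard)
    (I : Finset Lit) : softWeight (S ∪ E) I = softWeight S I := by
  have hnone : (reduct E I).filter (fun wr => wr.w ≠ .hard) = ∅ :=
    filter_eq_empty_iff.2 fun wr hwr => not_not.2 (hE wr (filter_subset _ _ hwr))
  rw [softWeight, reduct_union, filter_union, hnone, union_empty]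
  rfl

lemma softWeight_singleton_soft (t : ℝ) (r : Rule) (I : Finset Lit) :
    softWeight {⟨.soft t, r⟩} I = if Sat I r then t else 0 := by
  by_cases h : Sat I r <;> simp [softWeight, reduct, filter_singleton, h, Weight.val]

lemma hardCount_le_card (S : Program) (I : Finset Lit) : hardCount S I ≤ #S :=
  card_le_card ((filter_subset _ _).trans (filter_subset _ _))

lemma wLe_union_soft_iff {S : Program} {t : ℝ} {r : Rule} (hS : ⟨.soft t, r⟩ ∉ S)
    {X Y : Finset Lit} (hX : Sat X r) (hY : ¬Sat Y r) :
    WLe (S ∪ {⟨.soft t, r⟩}) X Y ↔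
      hardCount S X < hardCount S Y ∨
        hardCount S X = hardCount S Y ∧ softWeight S X + t ≤ softWeight S Y := by
  have hsoft : ∀ wr ∈ ({⟨.soft t, r⟩} : Program), wr.w ≠ .hard := by simp
  have hdisj : Disjoint S {⟨.soft t, r⟩} := disjoint_singleton_right.2 hS
  simp only [WLe, hardCount_union_of_forall_soft hsoft, softWeight_union_of_disjoint hdisj,
    softWeight_singleton_soft, if_pos hX, if_neg hY, add_zero]

lemma exists_pStable {S : Program} {I : Finset Lit} (h : Stable S I) : ∃ J, PStable S J := by
  obtain ⟨J, hJ, hmax⟩ := (SMset S).exists_max_image (hardCount S) ⟨I, mem_SMset.2 h⟩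
  exact ⟨J, mem_SMset.1 hJ, fun J' hJ' => hmax J' (mem_SMset.2 hJ')⟩

lemma PStable.hardCount_eq {S : Program} {I J : Finset Lit} (hI : PStable S I)
    (hJ : PStable S J) : hardCount S I = hardCount S J :=
  le_antisymm (hJ.2 I hI.1) (hI.2 J hJ.1)

lemma PStable.pStable_iff {S : Program} {J₀ J : Finset Lit} (hJ₀ : PStable S J₀) :
    PStable S J ↔ Stable S J ∧ hardCount S J = hardCount S J₀ :=
  ⟨fun hJ => ⟨hJ.1, hJ.hardCount_eq hJ₀⟩,
    fun ⟨hJ, heq⟩ => ⟨hJ, fun J' hJ' => heq ▸ hJ₀.2 J' hJ'⟩⟩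

lemma tendsto_exp_add_mul_atTop {c x : ℝ} (hx : x ≤ 0) :
    Tendsto (fun A => Real.exp (c + A * x)) atTop (𝓝 (if x = 0 then Real.exp c else 0)) := by
  split_ifs with h
  · simp [h]
  · exact Real.tendsto_exp_atBot.comp
      (tendsto_atBot_add_const_left _ _ (tendsto_id.atTop_mul_const_of_neg (hx.lt_of_ne h)))

def softPartition (S : Program) : ℝ :=
  ∑ J ∈ (SMset S).filter (PStable S), Real.exp (softWeight S J)

lemma softPartition_pos {S : Program} {I : Finset Lit} (hI : PStable S I) : 0 < softPartition S :=
  sum_pos (fun _ _ => Real.exp_pos _) ⟨I, mem_filter.2 ⟨mem_SMset.2 hI.1, hI⟩⟩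

/-- After dividing every weight degree by `exp (α · max hardCount)`, each term converges. -/
lemma tendsto_wdeg_div_sum {S : Program} {I : Finset Lit} (hI : Stable S I) :
    Tendsto (fun A => wdeg S I A / ∑ J ∈ SMset S, wdeg S J A) atTop
      (𝓝 (if PStable S I then Real.exp (softWeight S I) / softPartition S else 0)) := by
  obtain ⟨J₀, hJ₀⟩ := exists_pStable hI
  set M : ℝ := (hardCount S J₀ : ℝ)
  set g : Finset Lit → ℝ → ℝ :=
    fun J A => Real.exp (softWeight S J + A * (hardCount S J - M))
  have hg : ∀ J ∈ SMset S,
      Tendsto (g J) atTop (𝓝 (if PStable S J then Real.exp (softWeight S J) else 0)) := by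
    intro J hJ
    have hle : (hardCount S J : ℝ) - M ≤ 0 := by
      simpa [M] using hJ₀.2 J (mem_SMset.1 hJ)
    convert tendsto_exp_add_mul_atTop hle using 3
    simp [hJ₀.pStable_iff, mem_SMset.1 hJ, M, sub_eq_zero]
  have hsum : ∑ J ∈ SMset S, (if PStable S J then Real.exp (softWeight S J) else 0) =
      softPartition S := (sum_filter _ _).symm
  have hwdeg : ∀ J A, wdeg S J A = g J A * Real.exp (A * M) := by
    intro J A
    rw [wdeg, ← Real.exp_add]
    ring_nf
  simp_rw [hwdeg, ← sum_mul, mul_div_mul_right _ _ (Real.exp_ne_zero _)]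
  have hlim := (hg I (mem_SMset.2 hI)).div (tendsto_finsetSum _ hg)
    (hsum ▸ (softPartition_pos hJ₀).ne')
  rwa [hsum, ite_div, zero_div] at hlim

lemma prDeg_eq (S : Program) (I : Finset Lit) :
    PrDeg S I = if PStable S I then Real.exp (softWeight S I) / softPartition S else 0 := by
  by_cases hI : Stable S I
  · rw [PrDeg, if_pos hI, (tendsto_wdeg_div_sum hI).limUnder_eq]
  · rw [PrDeg, if_neg hI, if_neg fun h => hI h.1]

lemma prDeg_pos_iff {S : Program} {I : Finset Lit} : 0 < PrDeg S I ↔ PStable S I := by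
  rw [prDeg_eq]
  split_ifs with hI
  · exact iff_of_true (div_pos (Real.exp_pos _) (softPartition_pos hI)) hI
  · exact iff_of_false (lt_irrefl 0) hI

lemma prDeg_div_prDeg {S : Program} {I J : Finset Lit} (hI : PStable S I) (hJ : PStable S J) :
    PrDeg S I / PrDeg S J = Real.exp (softWeight S I - softWeight S J) := by
  rw [prDeg_eq, prDeg_eq, if_pos hI, if_pos hJ,
    div_div_div_cancel_right₀ (softPartition_pos hI).ne', Real.exp_sub]

lemma exp_div_sum_exp_add_const {ι : Type*} (s : Finset ι) (f : ι → ℝ) (c : ℝ) (i : ι) :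
    Real.exp (f i + c) / ∑ j ∈ s, Real.exp (f j + c) =
      Real.exp (f i) / ∑ j ∈ s, Real.exp (f j) := by
  simp_rw [Real.exp_add, ← sum_mul, mul_div_mul_right _ _ (Real.exp_ne_zero c)]

def WeightEquiv (P Q : Program) : Prop :=
  (∀ I, Stable P I ↔ Stable Q I) ∧
    ∀ X Y, Stable P X → Stable P Y →
      (hardCount P X ≤ hardCount P Y ↔ hardCount Q X ≤ hardCount Q Y) ∧
      (hardCount P X = hardCount P Y →
        softWeight P X - softWeight P Y = softWeight Q X - softWeight Q Y)

namespace WeightEquiv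

variable {P Q : Program}

lemma wLe_iff (h : WeightEquiv P Q) {X Y : Finset Lit} (hX : Stable P X) (hY : Stable P Y) :
    WLe P X Y ↔ WLe Q X Y := by
  obtain ⟨hle, hsub⟩ := h.2 X Y hX hY
  have hge := (h.2 Y X hY hX).1
  have hlt : hardCount P X < hardCount P Y ↔ hardCount Q X < hardCount Q Y := by
    simpa only [not_le] using hge.not
  have heq : hardCount P X = hardCount P Y ↔ hardCount Q X = hardCount Q Y := by
    simp only [le_antisymm_iff, hle, hge]
  rw [WLe, WLe, hlt]
  refine or_congr_right
    ⟨fun ⟨he, hs⟩ => ⟨heq.1 he, ?_⟩, fun ⟨he, hs⟩ => ⟨heq.2 he, ?_⟩⟩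
  · linarith [hsub he]
  · linarith [hsub (heq.2 he)]

lemma pStable_iff (h : WeightEquiv P Q) (I : Finset Lit) : PStable P I ↔ PStable Q I := by
  rw [PStable, PStable, ← h.1 I]
  refine and_congr_right fun hI => ⟨fun hmax J hJ => ?_, fun hmax J hJ => ?_⟩
  · exact (h.2 J I ((h.1 J).2 hJ) hI).1.1 (hmax J ((h.1 J).2 hJ))
  · exact (h.2 J I hJ hI).1.2 (hmax J ((h.1 J).1 hJ))

lemma pOrdEq (h : WeightEquiv P Q) : POrdEq P Q := by
  refine ⟨h.1, fun X hX => ?_⟩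
  rw [prDeg_eq, prDeg_eq, ← h.pStable_iff X]
  split_ifs with hXp
  swap
  · rfl
  have hfilter : (SMset Q).filter (PStable Q) = (SMset P).filter (PStable P) := by
    rw [SMset_eq_of_stable_iff h.1]
    exact filter_congr fun I _ => (h.pStable_iff I).symm
  set c := softWeight Q X - softWeight P X
  have hshift : ∀ J ∈ (SMset P).filter (PStable P), softWeight Q J = softWeight P J + c := by
    intro J hJ
    have hJp := (mem_filter.1 hJ).2
    linarith [(h.2 J X hJp.1 hX).2 (hJp.hardCount_eq hXp)]
  rw [softPartition, softPartition, hfilter,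
    sum_congr rfl fun J hJ => congrArg Real.exp (hshift J hJ),
    hshift X (mem_filter.2 ⟨mem_SMset.2 hX, hXp⟩), exp_div_sum_exp_add_const]

end WeightEquiv

section LexThreshold

variable {α : Type*} [LinearOrder α] {a b a' b' : α} {u v u' v' : ℝ}

lemma lt_imp_lt_and_eq_imp_of_lex_iff
    (h : ∀ᶠ t in cofinite,
      (a < b ∨ a = b ∧ u + t ≤ v) ↔ (a' < b' ∨ a' = b' ∧ u' + t ≤ v')) :
    (a < b → a' < b') ∧ (a = b → a' = b' ∧ v - u ≤ v' - u') := by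
  have pick : ∀ s : Set ℝ, s.Infinite → ∃ t ∈ s,
      (a < b ∨ a = b ∧ u + t ≤ v) ↔ (a' < b' ∨ a' = b' ∧ u' + t ≤ v') := fun s hs =>
    (hs.frequently_cofinite.and_eventually h).exists
  refine ⟨fun hab => ?_, fun hab => ?_⟩
  · obtain ⟨t, ht, hiff⟩ := pick _ (Set.Ioi_infinite (v' - u'))
    rcases hiff.1 (.inl hab) with h' | ⟨-, h'⟩
    · exact h'
    · linarith [Set.mem_Ioi.1 ht]
  have hab' : a' = b' := by
    rcases lt_trichotomy a' b' with hlt | heq | hgt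
    · obtain ⟨t, ht, hiff⟩ := pick _ (Set.Ioi_infinite (v - u))
      rcases hiff.2 (.inl hlt) with h' | ⟨-, h'⟩
      · exact absurd h' hab.not_lt
      · linarith [Set.mem_Ioi.1 ht]
    · exact heq
    · obtain ⟨t, ht, hiff⟩ := pick _ (Set.Iio_infinite (v - u))
      rcases hiff.1 (.inr ⟨hab, by linarith [Set.mem_Iio.1 ht]⟩) with h' | ⟨h', -⟩
      · exact absurd h' (lt_asymm hgt)
      · exact absurd h' (ne_of_gt hgt)
  refine ⟨hab', le_of_not_gt fun hlt => ?_⟩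
  obtain ⟨t, ht, hiff⟩ := pick _ (Set.Ioc_infinite hlt)
  rcases hiff.1 (.inr ⟨hab, by linarith [ht.2]⟩) with h' | ⟨-, h'⟩
  · exact absurd h' hab'.not_lt
  · linarith [ht.1]

lemma le_iff_le_and_sub_eq_of_lex_iff
    (h : ∀ᶠ t in cofinite,
      (a < b ∨ a = b ∧ u + t ≤ v) ↔ (a' < b' ∨ a' = b' ∧ u' + t ≤ v')) :
    (a ≤ b ↔ a' ≤ b') ∧ (a = b → u - v = u' - v') := by
  obtain ⟨hlt, heq⟩ := lt_imp_lt_and_eq_imp_of_lex_iff h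
  obtain ⟨hlt', heq'⟩ := lt_imp_lt_and_eq_imp_of_lex_iff (h.mono fun _ => Iff.symm)
  refine ⟨⟨fun hab => ?_, fun hab => ?_⟩, fun hab => ?_⟩
  · exact hab.lt_or_eq.elim (fun h => (hlt h).le) fun h => (heq h).1.le
  · exact hab.lt_or_eq.elim (fun h => (hlt' h).le) fun h => (heq' h).1.le
  · linarith [(heq hab).2, (heq' (heq hab).1).2]

end LexThreshold

lemma eventually_cofinite_soft_notMem (S : Program) (r : Rule) :
    ∀ᶠ t in cofinite, (⟨.soft t, r⟩ : WRule) ∉ S := by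
  have hinj : Function.Injective fun t : ℝ => (⟨.soft t, r⟩ : WRule) := fun t t' h => by
    simpa using h
  exact (S.finite_toSet.preimage hinj.injOn).eventually_cofinite_notMem

lemma sat_separating_constraint {X Y : Finset Lit} (h : X ≠ Y) :
    Sat X ⟨∅, Y, X \ Y⟩ ∧ ¬Sat Y ⟨∅, Y, X \ Y⟩ := by
  refine ⟨sat_constraint_iff.2 fun ⟨hYX, hempty⟩ => h (Subset.antisymm (fun x hx => ?_) hYX),
    fun hs => sat_constraint_iff.1 hs ⟨subset_rfl, sdiff_inter_self _ _⟩⟩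
  by_contra hxY
  have hmem : x ∈ X \ Y ∩ X := mem_inter.2 ⟨mem_sdiff.2 ⟨hx, hxY⟩, hx⟩
  rw [hempty] at hmem
  exact notMem_empty x hmem

lemma weightEquiv_of_qStrongEq {P Q : Program} (h : QStrongEq P Q) (R : Program) :
    WeightEquiv (P ∪ R) (Q ∪ R) := by
  refine ⟨(h R).1, fun X Y hX hY => ?_⟩
  have hPR : P ∪ R ⊆ P ∪ Q ∪ R := union_subset_union subset_union_left le_rfl
  have hQR : Q ∪ R ⊆ P ∪ Q ∪ R := union_subset_union subset_union_right le_rfl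
  rcases eq_or_ne X Y with rfl | hXY
  · exact ⟨iff_of_true le_rfl le_rfl, fun _ => by rw [sub_self, sub_self]⟩
  obtain ⟨hrX, hrY⟩ := sat_separating_constraint hXY
  apply le_iff_le_and_sub_eq_of_lex_iff
  filter_upwards [eventually_cofinite_soft_notMem (P ∪ Q ∪ R) ⟨∅, Y, X \ Y⟩] with t ht
  set w : WRule := ⟨.soft t, ⟨∅, Y, X \ Y⟩⟩ with hw
  have hstab : ∀ I, Stable (P ∪ R) I → Stable (P ∪ (R ∪ {w})) I :=
    fun I hI => by rwa [← union_assoc, stable_union_of_head_eq_empty (by simp [hw])]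
  have hwle := (h (R ∪ {w})).2 X Y (hstab X hX) (hstab Y hY)
  rwa [← union_assoc, ← union_assoc, wLe_union_soft_iff (fun hP => ht (hPR hP)) hrX hrY,
    wLe_union_soft_iff (fun hQ => ht (hQR hQ)) hrX hrY] at hwle

def Lit.atom : Lit → ℕ
  | .pos a => a
  | .neg a => a

def freshLit (L : Finset Lit) (j : ℕ) : Lit := .pos (L.sup Lit.atom + 1 + j)

lemma freshLit_notMem (L : Finset Lit) (j : ℕ) : freshLit L j ∉ L := fun h => by
  have := le_sup (f := Lit.atom) h
  simp only [freshLit, Lit.atom] at this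
  omega

lemma freshLit_injective (L : Finset Lit) : Function.Injective (freshLit L) := fun j j' h => by
  simpa [freshLit] using h

/-- The `j`-th copy of the hard constraint `α : ← Z, not (L \ Z)`, which among subsets of `L`
is violated exactly by `Z`; the fresh literal only makes the copies distinct. -/
def penaltyRule (L Z : Finset Lit) (j : ℕ) : WRule :=
  ⟨.hard, ⟨∅, Z, (L \ Z) ∪ {freshLit L j}⟩⟩

def penalty (L : Finset Lit) (𝒵 : Finset (Finset Lit)) (K : ℕ) : Program :=
  (𝒵 ×ˢ range K).image fun p => penaltyRule L p.1 p.2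

lemma sat_penaltyRule_iff {L I : Finset Lit} (hI : I ⊆ L) (Z : Finset Lit) (j : ℕ) :
    Sat I (penaltyRule L Z j).r ↔ I ≠ Z := by
  rw [penaltyRule, sat_constraint_iff, not_iff_not]
  constructor
  · rintro ⟨hZI, hempty⟩
    refine Subset.antisymm (fun x hx => ?_) hZI
    by_contra hxZ
    have hmem : x ∈ ((L \ Z) ∪ {freshLit L j}) ∩ I :=
      mem_inter.2 ⟨mem_union_left _ (mem_sdiff.2 ⟨hI hx, hxZ⟩), hx⟩
    rw [hempty] at hmem
    exact notMem_empty x hmem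
  · rintro rfl
    refine ⟨subset_rfl, ?_⟩
    rw [union_inter_distrib_right, sdiff_inter_self, empty_union,
      singleton_inter_of_notMem fun h => freshLit_notMem L j (hI h)]

lemma penaltyRule_injective (L : Finset Lit) :
    Function.Injective fun p : Finset Lit × ℕ => penaltyRule L p.1 p.2 := by
  rintro ⟨Z, j⟩ ⟨Z', j'⟩ h
  simp only [penaltyRule, WRule.mk.injEq, Rule.mk.injEq, true_and] at h
  obtain ⟨rfl, hneg⟩ := h
  have hmem : freshLit L j ∈ (L \ Z) ∪ {freshLit L j'} :=
    hneg ▸ mem_union_right _ (mem_singleton_self _)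
  rcases mem_union.1 hmem with h | h
  · exact absurd (mem_sdiff.1 h).1 (freshLit_notMem L j)
  · rw [freshLit_injective L (mem_singleton.1 h)]

lemma mem_penalty {L : Finset Lit} {𝒵 : Finset (Finset Lit)} {K : ℕ} {wr : WRule} :
    wr ∈ penalty L 𝒵 K ↔ ∃ Z j, (Z ∈ 𝒵 ∧ j < K) ∧ penaltyRule L Z j = wr := by
  simp [penalty]

lemma stable_union_penalty_iff {S : Program} {L : Finset Lit} {𝒵 : Finset (Finset Lit)}
    {K : ℕ} (I : Finset Lit) : Stable (S ∪ penalty L 𝒵 K) I ↔ Stable S I := by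
  refine stable_union_of_head_eq_empty (fun wr hwr => ?_) I
  obtain ⟨Z, j, -, rfl⟩ := mem_penalty.1 hwr
  rfl

lemma softWeight_union_penalty {S : Program} {L : Finset Lit} {𝒵 : Finset (Finset Lit)}
    {K : ℕ} (I : Finset Lit) : softWeight (S ∪ penalty L 𝒵 K) I = softWeight S I := by
  refine softWeight_union_of_forall_hard (fun wr hwr => ?_) I
  obtain ⟨Z, j, -, rfl⟩ := mem_penalty.1 hwr
  rfl

lemma disjoint_penalty {S : Program} {L : Finset Lit} (hS : litset S ⊆ L)
    (𝒵 : Finset (Finset Lit)) (K : ℕ) : Disjoint S (penalty L 𝒵 K) := by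
  refine disjoint_right.2 fun wr hwr hS' => ?_
  obtain ⟨Z, j, -, rfl⟩ := mem_penalty.1 hwr
  refine freshLit_notMem L j (hS (lits_subset_litset hS' ?_))
  simp [Rule.lits, penaltyRule]

lemma hardCount_penalty {L I : Finset Lit} (hI : I ⊆ L) (𝒵 : Finset (Finset Lit)) (K : ℕ) :
    hardCount (penalty L 𝒵 K) I = #(𝒵.erase I) * K := by
  have hall : ∀ wr ∈ reduct (penalty L 𝒵 K) I, wr.w = .hard := fun wr hwr => by
    obtain ⟨Z, j, -, rfl⟩ := mem_penalty.1 (filter_subset _ _ hwr)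
    rfl
  have hred : reduct (penalty L 𝒵 K) I =
      ((𝒵.erase I) ×ˢ range K).image fun p => penaltyRule L p.1 p.2 := by
    rw [reduct, penalty, filter_image, ← filter_ne', ← filter_product_left]
    exact congrArg _ (filter_congr fun p _ => (sat_penaltyRule_iff hI p.1 p.2).trans ne_comm)
  rw [hardCount, filter_true_of_mem hall, hred,
    card_image_of_injective _ (penaltyRule_injective L), card_product, card_range]

/-- Every stable model other than `X` and `Y` loses `K > #S` hard rules relative to them, more
than any difference in `hardCount S`. -/
lemma pStable_union_penalty_iff {S : Program} {L : Finset Lit} {K : ℕ} (hSL : litset S ⊆ L)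
    (hSK : #S < K) {X Y : Finset Lit} (hX : Stable S X) (hY : Stable S Y) :
    PStable (S ∪ penalty L (SMset S \ {X, Y}) K) X ↔ hardCount S Y ≤ hardCount S X := by
  set 𝒵 := SMset S \ {X, Y}
  have hcount : ∀ J, Stable S J →
      hardCount (S ∪ penalty L 𝒵 K) J = hardCount S J + #(𝒵.erase J) * K := fun J hJ => by
    rw [hardCount_union_of_disjoint (disjoint_penalty hSL 𝒵 K),
      hardCount_penalty (hJ.subset_litset.trans hSL)]
  have herase : ∀ J ∉ 𝒵, 𝒵.erase J = 𝒵 := fun J => erase_eq_of_notMem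
  have hX𝒵 : X ∉ 𝒵 := by simp [𝒵]
  have hY𝒵 : Y ∉ 𝒵 := by simp [𝒵]
  simp only [PStable, stable_union_penalty_iff, hcount X hX, herase X hX𝒵]
  refine ⟨fun ⟨_, hmax⟩ => ?_, fun hle => ⟨hX, fun J hJ => ?_⟩⟩
  · simpa [hcount Y hY, herase Y hY𝒵] using hmax Y hY
  rw [hcount J hJ]
  by_cases hJ𝒵 : J ∈ 𝒵
  · have hJK := (hardCount_le_card S J).trans_lt hSK
    rw [← card_erase_add_one hJ𝒵, add_one_mul]
    omega
  · obtain rfl | rfl : J = X ∨ J = Y := by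
      simpa [𝒵, mem_SMset, hJ, or_iff_not_imp_left] using hJ𝒵
    · rw [herase _ hJ𝒵]
    · rw [herase _ hJ𝒵]
      omega

lemma weightEquiv_of_pStrongEq {P Q : Program} (h : PStrongEq P Q) (R : Program) :
    WeightEquiv (P ∪ R) (Q ∪ R) := by
  refine ⟨(h R).1, fun X Y hX hY => ?_⟩
  have hXQ := ((h R).1 X).1 hX
  have hYQ := ((h R).1 Y).1 hY
  have hSM : SMset (Q ∪ R) = SMset (P ∪ R) := SMset_eq_of_stable_iff fun I => ((h R).1 I).symm
  set L := litset (P ∪ Q ∪ R)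
  set K := #(P ∪ Q ∪ R) + 1
  set E := penalty L (SMset (P ∪ R) \ {X, Y}) K with hE
  have hbound : ∀ S ⊆ P ∪ Q ∪ R, litset S ⊆ L ∧ #S < K := fun S hS =>
    ⟨litset_mono hS, Nat.lt_succ_of_le (card_le_card hS)⟩
  obtain ⟨hPL, hPK⟩ := hbound (P ∪ R) (union_subset_union subset_union_left le_rfl)
  obtain ⟨hQL, hQK⟩ := hbound (Q ∪ R) (union_subset_union subset_union_right le_rfl)
  have hPr : ∀ I, Stable (P ∪ R) I → PrDeg (P ∪ R ∪ E) I = PrDeg (Q ∪ R ∪ E) I := by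
    intro I hI
    simpa only [union_assoc] using
      (h (R ∪ E)).2 I (by rwa [← union_assoc, stable_union_penalty_iff])
  have hPQ : ∀ I, Stable (P ∪ R) I →
      (PStable (P ∪ R ∪ E) I ↔ PStable (Q ∪ R ∪ E) I) := fun I hI => by rw [← prDeg_pos_iff, ← prDeg_pos_iff, hPr I hI]
  have hXP := pStable_union_penalty_iff hPL hPK hX hY
  have hYP := pair_comm X Y ▸ pStable_union_penalty_iff hPL hPK hY hX
  have hYQ' := hSM ▸ pair_comm X Y ▸ pStable_union_penalty_iff hQL hQK hYQ hXQ
  refine ⟨by rw [← hYP, hPQ Y hY, hYQ'], fun heq => ?_⟩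
  have hXE := hXP.2 heq.ge
  have hYE := hYP.2 heq.le
  have hdivP := prDeg_div_prDeg hXE hYE
  have hdivQ := prDeg_div_prDeg ((hPQ X hX).1 hXE) ((hPQ Y hY).1 hYE)
  simp only [hE, softWeight_union_penalty] at hdivP hdivQ
  exact Real.exp_injective (by rw [← hdivP, ← hdivQ, hPr X hX, hPr Y hY])

/-- Two LPMLN programs are q-strongly equivalent if and only if they are
p-strongly equivalent. -/
theorem qStrongEq_iff_pStrongEq (P Q : Program) :
    QStrongEq P Q ↔ PStrongEq P Q := by
  refine ⟨fun h R => (weightEquiv_of_qStrongEq h R).pOrdEq, fun h R => ?_⟩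
  have hR := weightEquiv_of_pStrongEq h R
  exact ⟨hR.1, fun X Y hX hY => hR.wLe_iff hX hY⟩

end LPMLN
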